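/- arXiv:1512.01064 — 5 statements merged into one kernel-verified Lean document; each statement's English description precedes it below -/
import Mathlib

section
/- For α, β > -1 and n ≥ 1, the partial derivative of the Jacobi kernel at (1,1) equals K_n^{(0,1)}(1,1) = (2^{-α-β-2}/Γ(α+1)) · (Γ(n+α+β+3)/Γ(n+β+1)) · (Γ(n+α+2)/(Γ(n) Γ(α+3))). -/
open Real Finset

/-- The classical Jacobi polynomial `P_n^{(α,β)}`, via its explicit hypergeometric sum,
normalized so that `P_n^{(α,β)}(1) = binom(n+α, n)`. -/
noncomputable def jacobiP (α β : ℝ) (n : ℕ) (t : ℝ) : ℝ :=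
  (Real.Gamma (α + n + 1) / (n.factorial * Real.Gamma (α + β + n + 1))) *
    ∑ k ∈ Finset.range (n + 1),
      (n.choose k : ℝ) * (Real.Gamma (α + β + n + k + 1) / Real.Gamma (α + k + 1)) *
        ((t - 1) / 2) ^ k

/-- The squared `L²` norm `h_n^{(α,β)}` of the Jacobi polynomial. -/
noncomputable def jacobiH (α β : ℝ) (n : ℕ) : ℝ :=
  2 ^ (α + β + 1) * Real.Gamma (n + α + 1) * Real.Gamma (n + β + 1) /
    ((2 * n + α + β + 1) * n.factorial * Real.Gamma (n + α + β + 1))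

/-- The Christoffel–Darboux kernel of Jacobi polynomials. -/
noncomputable def jacobiK (α β : ℝ) (n : ℕ) (t u : ℝ) : ℝ :=
  ∑ k ∈ Finset.range (n + 1), jacobiP α β k t * jacobiP α β k u / jacobiH α β k

/-! At `t = 1` the expansion of `P_k` in powers of `(t - 1) / 2` makes `P_k(1)` its constant and
`P_k'(1)` half its linear coefficient, so each term `P_k(1) P_k'(1) / h_k` of `∂ᵤK_n(1, 1)` is an
explicit product of Gamma values (`P_0` is constant and contributes nothing). The resulting sum
telescopes: its partial sums are `n Γ(n+α+β+3) Γ(n+α+2) / (n! Γ(n+β+1) Γ(α+3))`, up to the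
factor `2^{-α-β-2} / Γ(α+1)`, and `n / n! = 1 / Γ(n)` for `n ≥ 1`. -/

lemma hasDerivAt_sum_choose_mul_pow (g : ℕ → ℝ) (k : ℕ) (a s : ℝ) :
    HasDerivAt (fun t => ∑ j ∈ range (k + 1), (k.choose j : ℝ) * g j * ((t - a) / s) ^ j)
      (k * g 1 / s) a := by
  have hlin : HasDerivAt (fun t : ℝ => (t - a) / s) (1 / s) a :=
    ((hasDerivAt_id a).sub_const a).div_const s
  refine (HasDerivAt.fun_sum fun j _ =>
    (hlin.fun_pow j).const_mul ((k.choose j : ℝ) * g j)).congr_deriv ?_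
  rcases Nat.eq_zero_or_pos k with rfl | hk
  · simp
  rw [sum_eq_single 1 (fun j _ hj => ?_) (fun h => absurd (mem_range.2 (by omega)) h)]
  · simp only [Nat.choose_one_right, sub_self, zero_div, tsub_self, pow_zero]
    ring
  · rcases j with _ | _ | j <;> simp_all

lemma jacobiP_one (α β : ℝ) (k : ℕ) (h : Real.Gamma (α + β + k + 1) ≠ 0) :
    jacobiP α β k 1 = Real.Gamma (α + k + 1) / (k.factorial * Real.Gamma (α + 1)) := by
  simp only [jacobiP, sub_self, zero_div, sum_range_succ', zero_pow (Nat.succ_ne_zero _),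
    mul_zero, sum_const_zero, zero_add, pow_zero, mul_one, Nat.choose_zero_right, Nat.cast_one,
    one_mul, Nat.cast_zero, add_zero]
  field_simp

lemma hasDerivAt_jacobiP_one (α β : ℝ) (k : ℕ) :
    HasDerivAt (jacobiP α β k)
      (Real.Gamma (α + k + 1) / (k.factorial * Real.Gamma (α + β + k + 1)) *
        (k * (Real.Gamma (α + β + k + 1 + 1) / Real.Gamma (α + 1 + 1)) / 2)) 1 := by
  have := (hasDerivAt_sum_choose_mul_pow
    (fun j => Real.Gamma (α + β + k + j + 1) / Real.Gamma (α + j + 1)) k 1 2).const_mul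
    (Real.Gamma (α + k + 1) / (k.factorial * Real.Gamma (α + β + k + 1)))
  rw [Nat.cast_one] at this
  exact this

noncomputable def jacobiKDerivTerm (α β : ℝ) (k : ℕ) : ℝ :=
  (2 * k + α + β + 3) * Real.Gamma (k + α + 2) * Real.Gamma (k + α + β + 3) /
    (k.factorial * Real.Gamma (α + 2) * Real.Gamma (k + β + 2))

lemma two_rpow_neg_sub_sub_two (a b : ℝ) : (2 : ℝ) ^ (-a - b - 2) = (2 ^ (a + b + 1) * 2)⁻¹ := by
  rw [show -a - b - 2 = -(a + b + 1 + 1) by ring, rpow_neg zero_le_two, rpow_add_one two_ne_zero]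

lemma jacobiP_one_mul_deriv_div_jacobiH (α β : ℝ) (hα : -1 < α) (hβ : -1 < β) (k : ℕ) :
    jacobiP α β (k + 1) 1 * deriv (jacobiP α β (k + 1)) 1 / jacobiH α β (k + 1) =
      2 ^ (-α - β - 2) / Real.Gamma (α + 1) * jacobiKDerivTerm α β k := by
  have hk : (0 : ℝ) ≤ k := k.cast_nonneg
  have hΓαβ : Real.Gamma (k + α + β + 2) ≠ 0 := (Gamma_pos_of_pos (by linarith)).ne'
  have hΓα : Real.Gamma (k + α + 2) ≠ 0 := (Gamma_pos_of_pos (by linarith)).ne'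
  have hΓβ : Real.Gamma (k + β + 2) ≠ 0 := (Gamma_pos_of_pos (by linarith)).ne'
  have hΓ1 : Real.Gamma (α + 1) ≠ 0 := (Gamma_pos_of_pos (by linarith)).ne'
  have hΓ2 : Real.Gamma (α + 2) ≠ 0 := (Gamma_pos_of_pos (by linarith)).ne'
  have hΓ3 : Real.Gamma (k + α + β + 3) = (k + α + β + 2) * Real.Gamma (k + α + β + 2) := by
    rw [← Gamma_add_one (by linarith)]; ring_nf
  have h2 : (2 : ℝ) ^ (α + β + 1) ≠ 0 := (rpow_pos_of_pos two_pos _).ne'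
  have hP : jacobiP α β (k + 1) 1 =
      Real.Gamma (α + (k + 1 : ℕ) + 1) / ((k + 1).factorial * Real.Gamma (α + 1)) :=
    jacobiP_one α β (k + 1) (by push_cast; rwa [show α + β + (k + 1) + 1 = k + α + β + 2 by ring])
  rw [(hasDerivAt_jacobiP_one α β (k + 1)).deriv, hP]
  simp only [jacobiH, jacobiKDerivTerm, Nat.factorial_succ, two_rpow_neg_sub_sub_two]
  push_cast
  rw [show α + (k + 1) + 1 = k + α + 2 by ring, show α + β + (k + 1) + 1 = k + α + β + 2 by ring,
    show (k + 1 : ℝ) + α + 1 = k + α + 2 by ring, show (k + 1 : ℝ) + β + 1 = k + β + 2 by ring,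
    show (k + 1 : ℝ) + α + β + 1 = k + α + β + 2 by ring, show α + 1 + 1 = α + 2 by ring,
    show k + α + β + 2 + 1 = k + α + β + 3 by ring, hΓ3]
  field_simp
  ring

lemma sum_range_jacobiKDerivTerm (α β : ℝ) (hα : -1 < α) (hβ : -1 < β) (n : ℕ) :
    ∑ k ∈ range n, jacobiKDerivTerm α β k =
      n * Real.Gamma (n + α + β + 3) * Real.Gamma (n + α + 2) /
        (n.factorial * Real.Gamma (n + β + 1) * Real.Gamma (α + 3)) := by
  induction n with
  | zero => simp
  | succ n ih =>
    have hn : (0 : ℝ) ≤ n := n.cast_nonneg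
    have hΓβ : Real.Gamma (n + β + 1) ≠ 0 := (Gamma_pos_of_pos (by linarith)).ne'
    have hΓ2 : Real.Gamma (α + 2) ≠ 0 := (Gamma_pos_of_pos (by linarith)).ne'
    have hΓ3 : Real.Gamma (α + 3) = (α + 2) * Real.Gamma (α + 2) := by
      rw [← Gamma_add_one (by linarith)]; ring_nf
    have hΓαβ : Real.Gamma (n + α + β + 4) = (n + α + β + 3) * Real.Gamma (n + α + β + 3) := by
      rw [← Gamma_add_one (by linarith)]; ring_nf
    have hΓα : Real.Gamma (n + α + 3) = (n + α + 2) * Real.Gamma (n + α + 2) := by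
      rw [← Gamma_add_one (by linarith)]; ring_nf
    have hΓβ' : Real.Gamma (n + β + 2) = (n + β + 1) * Real.Gamma (n + β + 1) := by
      rw [← Gamma_add_one (by linarith)]; ring_nf
    have hα2 : α + 2 ≠ 0 := by linarith
    have hβ1 : (n + β + 1 : ℝ) ≠ 0 := by linarith
    rw [sum_range_succ, ih, jacobiKDerivTerm, Nat.factorial_succ]
    push_cast
    rw [show (n + 1 : ℝ) + α + β + 3 = n + α + β + 4 by ring,
      show (n + 1 : ℝ) + α + 2 = n + α + 3 by ring, show (n + 1 : ℝ) + β + 1 = n + β + 2 by ring,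
      hΓαβ, hΓα, hΓβ', hΓ3]
    field_simp
    ring

/-- The partial derivative `K_n^{(0,1)}(t,u) = ∂K_n/∂u` of the Jacobi kernel, at `(1,1)`. -/
theorem jacobiK01_one_one (α β : ℝ) (hα : -1 < α) (hβ : -1 < β) (n : ℕ) (hn : 1 ≤ n) :
    deriv (fun u => jacobiK α β n 1 u) 1 =
      2 ^ (-α - β - 2) / Real.Gamma (α + 1) *
        (Real.Gamma (n + α + β + 3) / Real.Gamma (n + β + 1)) *
        (Real.Gamma (n + α + 2) / (Real.Gamma (n : ℝ) * Real.Gamma (α + 3))) := by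
  have hK : HasDerivAt (fun u => jacobiK α β n 1 u)
      (∑ k ∈ range (n + 1), jacobiP α β k 1 * deriv (jacobiP α β k) 1 / jacobiH α β k) 1 :=
    HasDerivAt.fun_sum fun k _ =>
      ((hasDerivAt_jacobiP_one α β k).differentiableAt.hasDerivAt.const_mul _).div_const _
  have hP₀ : deriv (jacobiP α β 0) 1 = 0 := by simp [(hasDerivAt_jacobiP_one α β 0).deriv]
  have hΓn : (Real.Gamma n)⁻¹ = n * (n.factorial : ℝ)⁻¹ := by
    rw [← Gamma_nat_eq_factorial, Gamma_add_one (by positivity), mul_inv, ← mul_assoc,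
      mul_inv_cancel₀ (by positivity), one_mul]
  rw [hK.deriv, sum_range_succ', hP₀, mul_zero, zero_div, add_zero]
  simp only [jacobiP_one_mul_deriv_div_jacobiH α β hα hβ, ← mul_sum,
    sum_range_jacobiKDerivTerm α β hα hβ]
  simp only [div_eq_mul_inv, mul_inv, hΓn]
  ring
end

section
/- For α, β > -1 and n ≥ 1, the mixed second partial derivative of the Jacobi kernel at (1,1) equals K_n^{(1,1)}(1,1) = (2^{-α-β-3}/Γ(α+2)) · (Γ(n+α+β+3)/Γ(n+β+1)) · (Γ(n+α+2)/(Γ(n) Γ(α+4))) · ((α+2) n (n+α+β+2) + β). -/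
open Real Finset

lemma hasDerivAt_sum_mul_half_sub_one_pow (s : Finset ℕ) (a : ℕ → ℝ) :
    HasDerivAt (fun t : ℝ => ∑ j ∈ s, a j * ((t - 1) / 2) ^ j)
      (if 1 ∈ s then a 1 / 2 else 0) 1 := by
  have hterm (j : ℕ) : HasDerivAt (fun t : ℝ => a j * ((t - 1) / 2) ^ j)
      (if j = 1 then a 1 / 2 else 0) 1 :=
    ((((hasDerivAt_id (1 : ℝ)).sub_const 1).div_const 2).pow j).const_mul (a j) |>.congr_deriv
      (by rcases j with _ | _ | j <;> simp [div_eq_mul_inv])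
  exact (HasDerivAt.fun_sum fun j (_ : j ∈ s) => hterm j).congr_deriv (Finset.sum_ite_eq' ..)

/-- `(P_k^{(α,β)})'(1)`, read off the linear coefficient of `jacobiP` in `(t - 1) / 2`. -/
noncomputable def jacobiDerivOne (α β : ℝ) (k : ℕ) : ℝ :=
  Gamma (α + k + 1) / (k.factorial * Gamma (α + β + k + 1)) *
    (k * (Gamma (α + β + k + 2) / Gamma (α + 2)) / 2)

lemma hasDerivAt_jacobiP_one_s8 (α β : ℝ) (k : ℕ) :
    HasDerivAt (jacobiP α β k) (jacobiDerivOne α β k) 1 := by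
  refine ((hasDerivAt_sum_mul_half_sub_one_pow _ _).const_mul
    (Gamma (α + k + 1) / (k.factorial * Gamma (α + β + k + 1)))).congr_deriv ?_
  rcases k with _ | k
  · simp [jacobiDerivOne]
  · rw [if_pos (by simp), jacobiDerivOne, Nat.choose_one_right]
    push_cast
    ring_nf

lemma deriv_deriv_jacobiK_one_one (α β : ℝ) (n : ℕ) :
    deriv (fun t => deriv (fun u => jacobiK α β n t u) 1) 1 =
      ∑ k ∈ range (n + 1), jacobiDerivOne α β k ^ 2 / jacobiH α β k := by
  have hinner : (fun t => deriv (fun u => jacobiK α β n t u) 1) =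
      fun t => ∑ k ∈ range (n + 1), jacobiP α β k t * jacobiDerivOne α β k / jacobiH α β k := by
    funext t
    exact (HasDerivAt.fun_sum fun k _ =>
      ((hasDerivAt_jacobiP_one_s8 α β k).const_mul (jacobiP α β k t)).div_const _).deriv
  rw [hinner]
  refine (HasDerivAt.fun_sum fun k _ =>
    ((hasDerivAt_jacobiP_one_s8 α β k).mul_const _).div_const _).deriv.trans ?_
  simp only [sq]

lemma two_rpow_neg_sub_sub_three (α β : ℝ) :
    (2 : ℝ) ^ (-α - β - 3) = ((2 : ℝ) ^ (α + β + 1))⁻¹ / 4 := by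
  rw [show -α - β - 3 = -(α + β + 1) - 2 by ring, Real.rpow_sub two_pos, Real.rpow_neg zero_le_two]
  norm_num

/-- The factor `R_k` shared by the summands of `K_n^{(1,1)}(1,1)` and by its closed form. -/
noncomputable def jacobiGammaRatio (α β : ℝ) (k : ℕ) : ℝ :=
  Gamma (k + α + 1) * Gamma (k + α + β + 2) / (Gamma k * Gamma (k + β + 1))

section

variable {α β : ℝ}

lemma jacobiGammaRatio_succ (hα : -1 < α) (hβ : -1 < β) {k : ℕ} (hk : 1 ≤ k) :
    jacobiGammaRatio α β (k + 1) =
      (k + α + 1) * (k + α + β + 2) / (k * (k + β + 1)) * jacobiGammaRatio α β k := by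
  have hk' : (1 : ℝ) ≤ k := by exact_mod_cast hk
  simp only [jacobiGammaRatio, Nat.cast_succ]
  rw [show (k + 1 + α + 1 : ℝ) = (k + α + 1) + 1 by ring,
    show (k + 1 + α + β + 2 : ℝ) = (k + α + β + 2) + 1 by ring,
    show (k + 1 + β + 1 : ℝ) = (k + β + 1) + 1 by ring,
    Gamma_add_one (s := k + α + 1) (by linarith), Gamma_add_one (s := k + α + β + 2) (by linarith),
    Gamma_add_one (s := k + β + 1) (by linarith), Gamma_add_one (s := (k : ℝ)) (by linarith)]
  have : k + β + 1 ≠ 0 := by linarith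
  field_simp

lemma sum_range_mul_jacobiGammaRatio (hα : -1 < α) (hβ : -1 < β) {n : ℕ} (hn : 1 ≤ n) :
    ∑ k ∈ range (n + 1), k * (k + α + β + 1) * (2 * k + α + β + 1) * jacobiGammaRatio α β k =
      (n + α + 1) * (n + α + β + 2) * ((α + 2) * n * (n + α + β + 2) + β) /
        ((α + 2) * (α + 3)) * jacobiGammaRatio α β n := by
  have h2 : α + 2 ≠ 0 := by linarith
  have h3 : α + 3 ≠ 0 := by linarith
  induction n, hn using Nat.le_induction with
  | base =>
    simp only [Finset.sum_range_succ, Finset.sum_range_zero, Nat.cast_zero, Nat.cast_one]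
    field_simp
    ring
  | succ n hn ih =>
    have hn' : (1 : ℝ) ≤ n := by exact_mod_cast hn
    rw [Finset.sum_range_succ, ih, jacobiGammaRatio_succ hα hβ hn]
    have : (n : ℝ) + β + 1 ≠ 0 := by linarith
    have : (n : ℝ) ≠ 0 := by linarith
    push_cast
    field_simp
    ring

lemma jacobiDerivOne_sq_div_jacobiH (hα : -1 < α) (hβ : -1 < β) (k : ℕ) :
    jacobiDerivOne α β k ^ 2 / jacobiH α β k =
      2 ^ (-α - β - 3) / Gamma (α + 2) ^ 2 *
        (k * (k + α + β + 1) * (2 * k + α + β + 1) * jacobiGammaRatio α β k) := by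
  rcases Nat.eq_zero_or_pos k with rfl | hk
  · simp [jacobiDerivOne]
  have hk' : (1 : ℝ) ≤ k := by exact_mod_cast hk
  have hfact : (k.factorial : ℝ) = k * Gamma k := by
    rw [← Gamma_nat_eq_factorial, Gamma_add_one (by linarith)]
  have : Gamma (α + 2) ≠ 0 := (Gamma_pos_of_pos (by linarith)).ne'
  have : Gamma k ≠ 0 := (Gamma_pos_of_pos (by linarith)).ne'
  have : Gamma (k + α + 1) ≠ 0 := (Gamma_pos_of_pos (by linarith)).ne'
  have : Gamma (k + β + 1) ≠ 0 := (Gamma_pos_of_pos (by linarith)).ne'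
  have : Gamma (k + α + β + 1) ≠ 0 := (Gamma_pos_of_pos (by linarith)).ne'
  have : 2 * (k : ℝ) + α + β + 1 ≠ 0 := by linarith
  have : (2 : ℝ) ^ (α + β + 1) ≠ 0 := (Real.rpow_pos_of_pos two_pos _).ne'
  simp only [jacobiDerivOne, jacobiH, jacobiGammaRatio, hfact, two_rpow_neg_sub_sub_three]
  rw [show α + k + 1 = k + α + 1 by ring, show α + β + k + 1 = k + α + β + 1 by ring,
    show α + β + k + 2 = (k + α + β + 1) + 1 by ring,
    show (k : ℝ) + α + β + 2 = (k + α + β + 1) + 1 by ring,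
    Gamma_add_one (s := k + α + β + 1) (by linarith)]
  field_simp
  ring

lemma gamma_div_eq_jacobiGammaRatio (hα : -1 < α) (hβ : -1 < β) (n : ℕ) :
    Gamma (n + α + β + 3) / Gamma (n + β + 1) * (Gamma (n + α + 2) / (Gamma n * Gamma (α + 4))) =
      (n + α + 1) * (n + α + β + 2) / ((α + 2) * (α + 3) * Gamma (α + 2)) *
        jacobiGammaRatio α β n := by
  have hn : (0 : ℝ) ≤ n := n.cast_nonneg
  have : Gamma (α + 2) ≠ 0 := (Gamma_pos_of_pos (by linarith)).ne'
  have : α + 2 ≠ 0 := by linarith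
  have : α + 3 ≠ 0 := by linarith
  have : α + 2 + 1 ≠ 0 := by linarith
  have : Gamma (n + β + 1) ≠ 0 := (Gamma_pos_of_pos (by linarith)).ne'
  rw [jacobiGammaRatio, show α + 4 = (α + 2 + 1) + 1 by ring,
    show (n : ℝ) + α + 2 = (n + α + 1) + 1 by ring,
    show (n : ℝ) + α + β + 3 = (n + α + β + 2) + 1 by ring,
    Gamma_add_one (s := α + 2 + 1) (by linarith), Gamma_add_one (s := α + 2) (by linarith),
    Gamma_add_one (s := n + α + 1) (by linarith), Gamma_add_one (s := n + α + β + 2) (by linarith)]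
  -- `Gamma 0 = 0` in Mathlib, so at `n = 0` both sides vanish
  rcases eq_or_ne (Gamma n) 0 with h | h
  · simp [h]
  · field_simp
    ring

end

/-- The mixed partial derivative `K_n^{(1,1)}(t,u) = ∂²K_n/(∂t∂u)` of the Jacobi kernel,
at `(1,1)`. -/
theorem jacobiK11_one_one (α β : ℝ) (hα : -1 < α) (hβ : -1 < β) (n : ℕ) (hn : 1 ≤ n) :
    deriv (fun t => deriv (fun u => jacobiK α β n t u) 1) 1 =
      2 ^ (-α - β - 3) / Real.Gamma (α + 2) *
        (Real.Gamma (n + α + β + 3) / Real.Gamma (n + β + 1)) *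
        (Real.Gamma (n + α + 2) / (Real.Gamma (n : ℝ) * Real.Gamma (α + 4))) *
        ((α + 2) * n * (n + α + β + 2) + β) := by
  calc deriv (fun t => deriv (fun u => jacobiK α β n t u) 1) 1
      = ∑ k ∈ range (n + 1), 2 ^ (-α - β - 3) / Gamma (α + 2) ^ 2 *
          (k * (k + α + β + 1) * (2 * k + α + β + 1) * jacobiGammaRatio α β k) := by
        rw [deriv_deriv_jacobiK_one_one]
        exact sum_congr rfl fun k _ => jacobiDerivOne_sq_div_jacobiH hα hβ k
    _ = 2 ^ (-α - β - 3) / Gamma (α + 2) ^ 2 *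
          ((n + α + 1) * (n + α + β + 2) * ((α + 2) * n * (n + α + β + 2) + β) /
            ((α + 2) * (α + 3)) * jacobiGammaRatio α β n) := by
        rw [← mul_sum, sum_range_mul_jacobiGammaRatio hα hβ hn]
    _ = _ := by
        have : Gamma (α + 2) ≠ 0 := (Gamma_pos_of_pos (by linarith)).ne'
        rw [mul_assoc (2 ^ (-α - β - 3) / Gamma (α + 2)), gamma_div_eq_jacobiGammaRatio hα hβ]
        field_simp
end

section
/- Let M be a 2×2 real symmetric positive semidefinite matrix, and let K_{j-1}, K_j be 2×2 real matrices satisfying K_j = K_{j-1} + v · h^{-1} · vᵀ for a column vector v ∈ ℝ² and a scalar h > 0, with I + M·K_{j-1} and I + M·K_j invertible. Setting Λ_{j-1} = (I + M·K_{j-1})^{-1} M and Λ_j = (I + M·K_j)^{-1} M, one has Λ_{j-1} · v · h^{-1} · vᵀ · Λ_j = Λ_{j-1} - Λ_j. -/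
open Matrix

/-- Rank-one update identity for the matrices `Λ_j = (I + M K_j)⁻¹ M` (Lemma 4.2 of the paper):
if `K_j = K_{j-1} + h⁻¹ v vᵀ`, then `Λ_{j-1} (h⁻¹ v vᵀ) Λ_j = Λ_{j-1} - Λ_j`. -/
theorem lambda_rank_one_update (M Kprev Kcur : Matrix (Fin 2) (Fin 2) ℝ)
    (hM : M.PosSemidef) (v : Fin 2 → ℝ) (h : ℝ) (hh : 0 < h)
    (hK : Kcur = Kprev + h⁻¹ • vecMulVec v v)
    (hprev : IsUnit (1 + M * Kprev)) (hcur : IsUnit (1 + M * Kcur)) :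
    (1 + M * Kprev)⁻¹ * M * (h⁻¹ • vecMulVec v v) * ((1 + M * Kcur)⁻¹ * M) =
      (1 + M * Kprev)⁻¹ * M - (1 + M * Kcur)⁻¹ * M := by
  set A := 1 + M * Kprev with hA
  set B := 1 + M * Kcur with hB
  have hdA : IsUnit A.det := (Matrix.isUnit_iff_isUnit_det A).mp hprev
  have hdB : IsUnit B.det := (Matrix.isUnit_iff_isUnit_det B).mp hcur
  have hMD : M * (h⁻¹ • vecMulVec v v) = B - A := by
    rw [hB, hA, hK, Matrix.mul_add]
    abel
  calc A⁻¹ * M * (h⁻¹ • vecMulVec v v) * (B⁻¹ * M)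
      = A⁻¹ * (M * (h⁻¹ • vecMulVec v v)) * B⁻¹ * M := by
        simp only [Matrix.mul_assoc]
    _ = A⁻¹ * (B - A) * B⁻¹ * M := by rw [hMD]
    _ = (A⁻¹ * B - A⁻¹ * A) * B⁻¹ * M := by rw [Matrix.mul_sub]
    _ = (A⁻¹ * B - 1) * B⁻¹ * M := by rw [Matrix.nonsing_inv_mul A hdA]
    _ = A⁻¹ * (B * B⁻¹) * M - B⁻¹ * M := by
        simp only [Matrix.sub_mul, Matrix.one_mul, Matrix.mul_assoc]
    _ = A⁻¹ * M - B⁻¹ * M := by rw [Matrix.mul_nonsing_inv B hdB, Matrix.mul_one]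
end

section
/- Under the hypotheses of the previous lemma, and additionally setting h̃ := h + vᵀ Λ_{j-1} v, one has h̃ · (h^{-1} - h^{-2} vᵀ Λ_j v) = 1; equivalently h̃^{-1} = h^{-1} - h^{-2} vᵀ Λ_j v. -/
/-!
Write `A = 1 + M Kprev`, `u = M v` and `q = vᵀ A⁻¹ u`. Since `M (v vᵀ) = u vᵀ`, the new matrix
`1 + M Kcur` is the rank-one update `A + h⁻¹ u vᵀ`, which sends `A⁻¹ u` to `(1 + q / h) u`.
Invertibility of the update forces `1 + q / h ≠ 0`, so (Sherman–Morrison)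
`vᵀ Λ_j v = q / (1 + q / h) = h q / (h + q)`, and `(h + q) (h⁻¹ - h⁻² h q / (h + q)) = 1`.
-/

open Matrix

namespace Matrix

variable {n K : Type*} [Fintype n] [DecidableEq n] [Field K]
  {A : Matrix n n K} {u v : n → K} {c : K}

theorem add_smul_vecMulVec_mulVec_inv_mulVec (hA : IsUnit A) :
    (A + c • vecMulVec u v) *ᵥ (A⁻¹ *ᵥ u) = (1 + c * (v ⬝ᵥ A⁻¹ *ᵥ u)) • u := by
  rw [add_mulVec, mulVec_mulVec, mul_nonsing_inv A ((isUnit_iff_isUnit_det A).1 hA), one_mulVec,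
    smul_mulVec, vecMulVec_mulVec, op_smul_eq_smul, smul_smul, add_smul, one_smul]

theorem one_add_mul_dotProduct_inv_mulVec_ne_zero (hA : IsUnit A)
    (hB : IsUnit (A + c • vecMulVec u v)) : 1 + c * (v ⬝ᵥ A⁻¹ *ᵥ u) ≠ 0 := by
  intro hzero
  have hw : A⁻¹ *ᵥ u = 0 := mulVec_injective_iff_isUnit.2 hB <| by
    rw [add_smul_vecMulVec_mulVec_inv_mulVec hA, hzero, zero_smul, mulVec_zero]
  simp [hw] at hzero

theorem dotProduct_inv_add_smul_vecMulVec_mulVec (hA : IsUnit A)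
    (hB : IsUnit (A + c • vecMulVec u v)) :
    v ⬝ᵥ (A + c • vecMulVec u v)⁻¹ *ᵥ u =
      (v ⬝ᵥ A⁻¹ *ᵥ u) / (1 + c * (v ⬝ᵥ A⁻¹ *ᵥ u)) := by
  have hne := one_add_mul_dotProduct_inv_mulVec_ne_zero hA hB
  have hinv : (A + c • vecMulVec u v)⁻¹ *ᵥ u = (1 + c * (v ⬝ᵥ A⁻¹ *ᵥ u))⁻¹ • A⁻¹ *ᵥ u := by
    apply mulVec_injective_iff_isUnit.2 hB
    rw [mulVec_mulVec, mul_nonsing_inv _ ((isUnit_iff_isUnit_det _).1 hB), one_mulVec,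
      mulVec_smul, add_smul_vecMulVec_mulVec_inv_mulVec hA, smul_smul, inv_mul_cancel₀ hne,
      one_smul]
  rw [hinv, dotProduct_smul, smul_eq_mul, div_eq_inv_mul]

end Matrix

theorem sobolev_norm_inverse_general (M Kprev Kcur : Matrix (Fin 2) (Fin 2) ℝ)
    (v : Fin 2 → ℝ) (h : ℝ) (hh : 0 < h)
    (hK : Kcur = Kprev + h⁻¹ • vecMulVec v v)
    (hprev : IsUnit (1 + M * Kprev)) (hcur : IsUnit (1 + M * Kcur)) :
    (h + v ⬝ᵥ ((1 + M * Kprev)⁻¹ * M).mulVec v) *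
        (h⁻¹ - h⁻¹ ^ 2 * (v ⬝ᵥ ((1 + M * Kcur)⁻¹ * M).mulVec v)) = 1 := by
  have hupdate : 1 + M * Kcur = (1 + M * Kprev) + h⁻¹ • vecMulVec (M *ᵥ v) v := by
    rw [hK, mul_add, Matrix.mul_smul, mul_vecMulVec, add_assoc]
  rw [hupdate] at hcur ⊢
  have hne := one_add_mul_dotProduct_inv_mulVec_ne_zero hprev hcur
  rw [← mulVec_mulVec, ← mulVec_mulVec, dotProduct_inv_add_smul_vecMulVec_mulVec hprev hcur]
  generalize v ⬝ᵥ (1 + M * Kprev)⁻¹ *ᵥ M *ᵥ v = q at hne ⊢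
  have hq : h + q ≠ 0 := by
    rw [show 1 + h⁻¹ * q = h⁻¹ * (h + q) by field_simp] at hne
    exact right_ne_zero_of_mul hne
  field_simp
  ring

/-- Norm relation for the Sobolev norm `h̃ = h + vᵀ Λ_{j-1} v` (Lemma 4.3 of the paper):
`h̃ (h⁻¹ - h⁻² vᵀ Λ_j v) = 1`. -/
theorem sobolev_norm_inverse (M Kprev Kcur : Matrix (Fin 2) (Fin 2) ℝ)
    (hM : M.PosSemidef) (v : Fin 2 → ℝ) (h : ℝ) (hh : 0 < h)
    (hK : Kcur = Kprev + h⁻¹ • vecMulVec v v)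
    (hprev : IsUnit (1 + M * Kprev)) (hcur : IsUnit (1 + M * Kcur)) :
    (h + v ⬝ᵥ ((1 + M * Kprev)⁻¹ * M).mulVec v) *
        (h⁻¹ - h⁻¹ ^ 2 * (v ⬝ᵥ ((1 + M * Kcur)⁻¹ * M).mulVec v)) = 1 :=
  sobolev_norm_inverse_general M Kprev Kcur v h hh hK hprev hcur
end

section
/- Let ⟨·,·⟩ be an inner product on the space of real polynomials in d variables that is centrally symmetric, i.e. ⟨x^κ, x^τ⟩ = 0 whenever |κ| + |τ| is odd. If P is a polynomial of total degree n that is orthogonal to all polynomials of total degree at most n-1, then P is a sum of monomials whose degrees all have the same parity as n (monomials of even degree if n is even, of odd degree if n is odd). -/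
open MvPolynomial

/-- If an inner product `B` on real polynomials in `d` variables is centrally symmetric
(monomials whose total degrees have odd sum are orthogonal), and `P` has total degree `n`
and is orthogonal to all polynomials of total degree less than `n`, then every monomial
appearing in `P` has degree of the same parity as `n`. -/
theorem centrally_symmetric_orthogonal_parity (d : ℕ)
    (B : MvPolynomial (Fin d) ℝ →ₗ[ℝ] MvPolynomial (Fin d) ℝ →ₗ[ℝ] ℝ)
    (hsymm : ∀ p q, B p q = B q p)
    (hpos : ∀ p, p ≠ 0 → 0 < B p p)
    (hcentral : ∀ κ τ : Fin d →₀ ℕ, Odd ((∑ i, κ i) + (∑ i, τ i)) →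
      B (monomial κ 1) (monomial τ 1) = 0)
    (P : MvPolynomial (Fin d) ℝ) (n : ℕ) (hdeg : P.totalDegree = n)
    (horth : ∀ Q : MvPolynomial (Fin d) ℝ, Q.totalDegree < n → B P Q = 0) :
    ∀ κ ∈ P.support, (∑ i, κ i) % 2 = n % 2 := by
  intro κ0 hκ0
  by_contra hne
  set f : (Fin d →₀ ℕ) → ℕ := fun κ => ∑ i, κ i with hfdef
  have hfeq : ∀ κ : Fin d →₀ ℕ, (κ.sum fun _ e => e) = f κ := fun κ =>
    Finsupp.sum_fintype _ _ (fun _ => rfl)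
  have hdegκ : ∀ κ ∈ P.support, f κ ≤ n := by
    intro κ hκ
    rw [← hfeq, ← hdeg]
    exact le_totalDegree hκ
  have hκ0lt : f κ0 < n := lt_of_le_of_ne (hdegκ _ hκ0) (by
    intro h; exact hne (by rw [show (∑ i, κ0 i) = f κ0 from rfl, h]))
  have hnpos : 0 < n := lt_of_le_of_lt (Nat.zero_le _) hκ0lt
  set S := P.support.filter (fun κ => ¬ (f κ % 2 = n % 2)) with hS
  set T := P.support.filter (fun κ => f κ % 2 = n % 2) with hT
  set P1 := ∑ κ ∈ S, monomial κ (P.coeff κ) with hP1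
  set P2 := ∑ κ ∈ T, monomial κ (P.coeff κ) with hP2
  have hsplit : P = P2 + P1 := by
    rw [hP1, hP2, hS, hT,
      Finset.sum_filter_add_sum_filter_not P.support (fun κ => f κ % 2 = n % 2)]
    exact P.as_sum
  -- P1 is nonzero
  have hκ0S : κ0 ∈ S := Finset.mem_filter.mpr ⟨hκ0, hne⟩
  have hcoeff : P1.coeff κ0 = P.coeff κ0 := by
    rw [hP1, coeff_sum]
    rw [Finset.sum_eq_single κ0]
    · simp [coeff_monomial]
    · intro b _ hb; simp [coeff_monomial, hb]
    · intro h; exact absurd hκ0S h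
  have hP1ne : P1 ≠ 0 := by
    intro h
    apply mem_support_iff.mp hκ0
    rw [← hcoeff, h, coeff_zero]
  -- P1 has total degree < n
  have hP1deg : P1.totalDegree < n := by
    refine lt_of_le_of_lt (totalDegree_finset_sum _ _) ?_
    rw [Finset.sup_lt_iff (show ⊥ < n from hnpos)]
    intro κ hκ
    rcases Finset.mem_filter.mp hκ with ⟨hκP, hκpar⟩
    refine lt_of_le_of_lt (totalDegree_monomial_le _ _) ?_
    have hid : (κ.sum fun _ => id) = f κ := Finsupp.sum_fintype _ _ (fun _ => rfl)
    rw [hid]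
    exact lt_of_le_of_ne (hdegκ _ hκP) (fun h => hκpar (by rw [h]))
  have h1 : B P P1 = 0 := horth P1 hP1deg
  -- B P2 P1 = 0
  have hz : ∀ κ ∈ T, ∀ τ ∈ S,
      B (monomial κ (P.coeff κ)) (monomial τ (P.coeff τ)) = 0 := by
    intro κ hκ τ hτ
    have hκp := (Finset.mem_filter.mp hκ).2
    have hτp := (Finset.mem_filter.mp hτ).2
    have hodd : Odd (f κ + f τ) := by
      rw [Nat.odd_iff]; omega
    have : monomial κ (P.coeff κ) = (P.coeff κ) • monomial κ (1:ℝ) := by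
      rw [smul_monomial, smul_eq_mul, mul_one]
    rw [this]
    have : monomial τ (P.coeff τ) = (P.coeff τ) • monomial τ (1:ℝ) := by
      rw [smul_monomial, smul_eq_mul, mul_one]
    rw [this]
    simp only [map_smul, LinearMap.smul_apply, smul_eq_mul, hcentral κ τ hodd,
      mul_zero]
  have h2 : B P2 P1 = 0 := by
    rw [hP2, hP1, map_sum]
    refine Finset.sum_eq_zero fun τ hτ => ?_
    rw [map_sum, LinearMap.sum_apply]
    exact Finset.sum_eq_zero fun κ hκ => hz κ hκ τ hτ
  have h3 : B P1 P1 = 0 := by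
    have := h1
    rw [hsplit, map_add, LinearMap.add_apply, h2, zero_add] at this
    exact this
  exact absurd h3 (ne_of_gt (hpos P1 hP1ne))
end
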